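/- Under the final semantics, the truth predicate commutes with conjunction: T(⌜φ∧ψ⌝) ↔ T(⌜φ⌝) ∧ T(⌜ψ⌝) is true, and F(⌜φ∧ψ⌝) ↔ F(⌜φ⌝) ∨ F(⌜ψ⌝) is true, for all sentences φ, ψ. -/

import Mathlib

/-- Three truth values of Strong Kleene semantics: true, false, undetermined. -/
inductive K3 : Type
  | t : K3
  | f : K3
  | u : K3
deriving DecidableEq

/-- Strong Kleene negation. -/
def kneg : K3 → K3
  | .t => .f
  | .f => .t
  | .u => .u

/-- Strong Kleene conjunction. -/
def kand : K3 → K3 → K3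
  | .t, x => x
  | .f, _ => .f
  | .u, .t => .u
  | .u, .f => .f
  | .u, .u => .u

/-- Strong Kleene disjunction. -/
def kor : K3 → K3 → K3
  | .t, _ => .t
  | .f, x => x
  | .u, .t => .t
  | .u, .f => .u
  | .u, .u => .u

/-- Strong Kleene conditional: ¬φ ∨ ψ. -/
def kimp (x y : K3) : K3 := kor (kneg x) y

/-- Strong Kleene biconditional. -/
def kiff : K3 → K3 → K3
  | .t, .t => .t
  | .f, .f => .t
  | .t, .f => .f
  | .f, .t => .f
  | _, _ => .u

/-- Information order on K3: `|` below everything, classical values incomparable. -/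
def kle (x y : K3) : Prop := x = K3.u ∨ x = y

/-- Sentences of a language with a truth predicate: atoms, truth attributions
`T⌜φ⌝`, and the classical connectives. -/
inductive Sent : Type
  | atom : Nat → Sent
  | tr : Sent → Sent
  | neg : Sent → Sent
  | conj : Sent → Sent → Sent
  | disj : Sent → Sent → Sent
  | impl : Sent → Sent → Sent
  | biimp : Sent → Sent → Sent

/-- `Ip` satisfies the Strong Kleene conditions on compound sentences. -/
def SKConditions (Ip : Sent → K3) : Prop :=
  (∀ φ, Ip (Sent.neg φ) = kneg (Ip φ)) ∧
  (∀ φ ψ, Ip (Sent.conj φ ψ) = kand (Ip φ) (Ip ψ)) ∧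
  (∀ φ ψ, Ip (Sent.disj φ ψ) = kor (Ip φ) (Ip ψ)) ∧
  (∀ φ ψ, Ip (Sent.impl φ ψ) = kimp (Ip φ) (Ip ψ)) ∧
  (∀ φ ψ, Ip (Sent.biimp φ ψ) = kiff (Ip φ) (Ip ψ))

/-- `Ip` is a fixed point: truth attributions get the value of the attributed
sentence. -/
def FixedPoint (Ip : Sent → K3) : Prop :=
  SKConditions Ip ∧ ∀ φ, Ip (Sent.tr φ) = Ip φ

/-- `If'` satisfies the classical recursive conditions on compound sentences. -/
def ClassicalConditions (If' : Sent → Bool) : Prop :=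
  (∀ φ, If' (Sent.neg φ) = !(If' φ)) ∧
  (∀ φ ψ, If' (Sent.conj φ ψ) = (If' φ && If' ψ)) ∧
  (∀ φ ψ, If' (Sent.disj φ ψ) = (If' φ || If' ψ)) ∧
  (∀ φ ψ, If' (Sent.impl φ ψ) = (!(If' φ) || If' ψ)) ∧
  (∀ φ ψ, If' (Sent.biimp φ ψ) = (If' φ == If' ψ))

/-- The final semantics condition on the truth predicate: `T⌜φ⌝` is true
exactly when `φ` is true in the primary semantics. -/
def FinalTruth (Ip : Sent → K3) (If' : Sent → Bool) : Prop :=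
  ∀ φ, If' (Sent.tr φ) = decide (Ip φ = K3.t)

theorem kand_eq_t_iff (x y : K3) : kand x y = .t ↔ x = .t ∧ y = .t := by
  cases x <;> cases y <;> decide

theorem kneg_kand_eq_t_iff (x y : K3) :
    kneg (kand x y) = .t ↔ kneg x = .t ∨ kneg y = .t := by
  cases x <;> cases y <;> decide

theorem ClassicalConditions.biimp_eq_true_iff {If' : Sent → Bool} (hIf : ClassicalConditions If')
    (φ ψ : Sent) : If' (Sent.biimp φ ψ) = true ↔ If' φ = If' ψ := by
  rw [hIf.2.2.2.2, beq_iff_eq]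

/-- In the final semantics the truth predicate commutes with conjunction:
`T⌜φ∧ψ⌝ ↔ T⌜φ⌝ ∧ T⌜ψ⌝` and `F⌜φ∧ψ⌝ ↔ F⌜φ⌝ ∨ F⌜ψ⌝` are true, where
`F⌜χ⌝ = T⌜¬χ⌝`. -/
theorem final_T_commutes_with_conj (Ip : Sent → K3) (If' : Sent → Bool)
    (hIp : FixedPoint Ip)
    (hIf : ClassicalConditions If')
    (hT : FinalTruth Ip If') :
    ∀ φ ψ,
      If' (Sent.biimp (Sent.tr (Sent.conj φ ψ))
            (Sent.conj (Sent.tr φ) (Sent.tr ψ))) = true ∧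
      If' (Sent.biimp (Sent.tr (Sent.neg (Sent.conj φ ψ)))
            (Sent.disj (Sent.tr (Sent.neg φ)) (Sent.tr (Sent.neg ψ)))) = true := by
  intro φ ψ
  obtain ⟨⟨hneg, hconj, -⟩, -⟩ := hIp
  refine ⟨(hIf.biimp_eq_true_iff _ _).2 ?_, (hIf.biimp_eq_true_iff _ _).2 ?_⟩
  all_goals obtain ⟨-, cconj, cdisj, -⟩ := hIf
  · rw [cconj, hT, hT, hT]
    simp only [hconj, kand_eq_t_iff, Bool.decide_and]
  · rw [cdisj, hT, hT, hT]
    simp only [hneg, hconj, kneg_kand_eq_t_iff, Bool.decide_or]
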